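/- arXiv:0811.3402 — 2 statements merged into one kernel-verified Lean document; each statement's English description precedes it below -/
import Mathlib

section
/- For every preferential structure ⟨I, ℓ, ≺⟩ over a set U there exists a preferential structure ⟨I', ℓ', ≺'⟩ over U whose relation ≺' is transitive and which has the same minimization function: for every X ⊆ U, μ_{⟨I,ℓ,≺⟩}(X) = μ_{⟨I',ℓ',≺'⟩}(X). -/
/-! A copy `(x, Y)` of `x` with `x ∈ μ Y` is made to be beaten exactly by the copies `(y, Z)`
with `y ∉ Y` and `Y ⊆ Z`; a copy `(x, Y)` with `x ∉ μ Y` beats only itself, so it never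
survives. This relation is transitive, and the copies `(y, univ)` show that `(x, Y)` survives
in `X` only if `X ⊆ Y`. Hence its minimization function is `X ↦ μ X` for every `μ` with
`μ X ⊆ X` and `μ Y ∩ X ⊆ μ X` whenever `X ⊆ Y`, and every minimization function has these
two properties. -/

universe u v

/-- The minimization function of a preferential structure ⟨I, ℓ, ≺⟩ over U. -/
def prefMu {I U : Type*} (ℓ : I → U) (prec : I → I → Prop) (X : Set U) : Set U :=
  {x ∈ X | ∃ i : I, ℓ i = x ∧ ¬ ∃ j : I, ℓ j ∈ X ∧ prec j i}

section PrefMu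

variable {I J U : Type*} (ℓ : I → U) (prec : I → I → Prop)

theorem prefMu_subset (X : Set U) : prefMu ℓ prec X ⊆ X :=
  fun _ hx => hx.1

theorem prefMu_inter_subset_of_subset {X Y : Set U} (hXY : X ⊆ Y) :
    prefMu ℓ prec Y ∩ X ⊆ prefMu ℓ prec X := by
  rintro x ⟨⟨-, i, hi, hmin⟩, hxX⟩
  exact ⟨hxX, i, hi, fun ⟨j, hjX, hji⟩ => hmin ⟨j, hXY hjX, hji⟩⟩

theorem prefMu_comp_of_surjective {g : J → I} (hg : g.Surjective) (X : Set U) :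
    prefMu (ℓ ∘ g) (fun a b => prec (g a) (g b)) X = prefMu ℓ prec X := by
  simp only [prefMu, Function.comp_apply, hg.exists]

end PrefMu

section Representation

variable {U : Type*} (μ : Set U → Set U)

def canonicalPrec (q p : U × Set U) : Prop :=
  (p.1 ∈ μ p.2 ∧ q.1 ∉ p.2 ∧ p.2 ⊆ q.2) ∨ (p.1 ∉ μ p.2 ∧ q = p)

theorem transitive_canonicalPrec : Transitive (canonicalPrec μ) := by
  rintro r q p hrq (⟨hp, hqp, hpq⟩ | ⟨-, rfl⟩)
  · rcases hrq with ⟨-, hrq, hqr⟩ | ⟨-, rfl⟩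
    · exact Or.inl ⟨hp, fun hr => hrq (hpq hr), hpq.trans hqr⟩
    · exact Or.inl ⟨hp, hqp, hpq⟩
  · exact hrq

theorem prefMu_canonicalPrec (hsub : ∀ X, μ X ⊆ X)
    (hcoh : ∀ X Y, X ⊆ Y → μ Y ∩ X ⊆ μ X) (X : Set U) :
    prefMu Prod.fst (canonicalPrec μ) X = μ X := by
  ext x
  constructor
  · rintro ⟨hxX, ⟨x, Y⟩, rfl, hmin⟩
    have hxY : x ∈ μ Y := by
      by_contra hxY
      exact hmin ⟨(x, Y), hxX, Or.inr ⟨hxY, rfl⟩⟩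
    have hXY : X ⊆ Y := by
      intro y hyX
      by_contra hyY
      exact hmin ⟨(y, Set.univ), hyX, Or.inl ⟨hxY, hyY, Set.subset_univ Y⟩⟩
    exact hcoh X Y hXY ⟨hxY, hxX⟩
  · intro hx
    refine ⟨hsub X hx, (x, X), rfl, ?_⟩
    rintro ⟨q, hqX, ⟨-, hqX', -⟩ | ⟨hbad, -⟩⟩
    exacts [hqX' hqX, hbad hx]

end Representation

/-- Every preferential structure is equivalent to a transitive one:
they have the same minimization functions. -/
theorem equiv_transitive_structure {U : Type u} {I : Type v}
    (ℓ : I → U) (prec : I → I → Prop) :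
    ∃ (I' : Type (max u v)) (ℓ' : I' → U) (prec' : I' → I' → Prop),
      Transitive prec' ∧ ∀ X : Set U, prefMu ℓ prec X = prefMu ℓ' prec' X := by
  set μ := prefMu ℓ prec
  refine ⟨ULift.{v} (U × Set U), Prod.fst ∘ ULift.down,
    fun q p => canonicalPrec μ q.down p.down,
    fun _ _ _ hrq hqp => transitive_canonicalPrec μ hrq hqp, fun X => ?_⟩
  rw [prefMu_comp_of_surjective _ _ ULift.down_surjective,
    prefMu_canonicalPrec μ (prefMu_subset ℓ prec)
      (fun _ _ => prefMu_inter_subset_of_subset ℓ prec)]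
end

section
/- Let Z be a set, 𝒴 a collection of subsets of Z closed under finite unions, and μ a function assigning to each X ∈ 𝒴 a subset μ(X) ⊆ Z satisfying (μ⊆), (μPR), and (μCUM). For U ∈ 𝒴 define H(U) := ⋃{X ∈ 𝒴 : μ(X) ⊆ U}. Then for all A, B, X, U, Y ∈ 𝒴: (i) μ(A) ⊆ B implies μ(A ∪ B) = μ(B); (ii) μ(X) ⊆ U and U ⊆ Y imply μ(Y) ∩ X ⊆ μ(U); (iii) μ(X) ⊆ U implies μ(U) ∩ X ⊆ μ(X); (iv) μ(U ∪ Y) \ H(U) ⊆ μ(Y); (v) μ(Y) ⊆ H(U) implies Y ⊆ H(U) and μ(U ∪ Y) = μ(U); (vi) if x ∈ μ(U) and x ∈ Y \ μ(Y), then Y ⊈ H(U); (vii) Y ⊈ H(U) implies μ(U ∪ Y) ⊈ H(U). -/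
/-!
(μPR) applied inside a union gives `μ (A ∪ B) ⊆ μ A ∪ B`; with (μCUM) this yields (i), and
(ii), (iii) follow by comparing both sides with a union. The key fact about the hull is that
`μ Y ⊆ H U` forces `μ (U ∪ Y) ⊆ U`: a point of `μ (U ∪ Y)` outside `H U` lies in `μ Y ⊆ H U`
by (iv), and a point inside some `X` with `μ X ⊆ U` lies in `μ U` by (ii). Then (μCUM) gives (v),
and (vi), (vii) are short consequences of (v).
-/

namespace ChoiceFunction

variable {α : Type*}

/-- (μ⊆) -/
def MuSubset (𝒴 : Set (Set α)) (μ : Set α → Set α) : Prop :=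
  ∀ X ∈ 𝒴, μ X ⊆ X

/-- (μPR) -/
def MuPR (𝒴 : Set (Set α)) (μ : Set α → Set α) : Prop :=
  ∀ X ∈ 𝒴, ∀ Y ∈ 𝒴, X ⊆ Y → μ Y ∩ X ⊆ μ X

/-- (μCUM) -/
def MuCum (𝒴 : Set (Set α)) (μ : Set α → Set α) : Prop :=
  ∀ X ∈ 𝒴, ∀ Y ∈ 𝒴, μ X ⊆ Y → Y ⊆ X → μ Y = μ X

def hull (𝒴 : Set (Set α)) (μ : Set α → Set α) (U : Set α) : Set α :=
  ⋃₀ {X | X ∈ 𝒴 ∧ μ X ⊆ U}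

variable {𝒴 : Set (Set α)} {μ : Set α → Set α} {A B X U Y : Set α}

theorem subset_hull (hX : X ∈ 𝒴) (h : μ X ⊆ U) : X ⊆ hull 𝒴 μ U :=
  Set.subset_sUnion_of_mem ⟨hX, h⟩

theorem self_subset_hull (hSub : MuSubset 𝒴 μ) (hU : U ∈ 𝒴) : U ⊆ hull 𝒴 μ U :=
  subset_hull hU (hSub U hU)

theorem mu_inter_left_subset_of_union (hPR : MuPR 𝒴 μ) (hA : A ∈ 𝒴) (hAB : A ∪ B ∈ 𝒴) :
    μ (A ∪ B) ∩ A ⊆ μ A :=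
  hPR A hA _ hAB Set.subset_union_left

theorem mu_inter_right_subset_of_union (hPR : MuPR 𝒴 μ) (hB : B ∈ 𝒴) (hAB : A ∪ B ∈ 𝒴) :
    μ (A ∪ B) ∩ B ⊆ μ B :=
  hPR B hB _ hAB Set.subset_union_right

theorem mu_union_subset (hSub : MuSubset 𝒴 μ) (hPR : MuPR 𝒴 μ) (hA : A ∈ 𝒴)
    (hAB : A ∪ B ∈ 𝒴) : μ (A ∪ B) ⊆ μ A ∪ B := by
  intro x hx
  rcases hSub _ hAB hx with hxA | hxB
  · exact Or.inl (mu_inter_left_subset_of_union hPR hA hAB ⟨hx, hxA⟩)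
  · exact Or.inr hxB

theorem mu_union_eq_right (hUnion : SupClosed 𝒴) (hSub : MuSubset 𝒴 μ) (hPR : MuPR 𝒴 μ)
    (hCum : MuCum 𝒴 μ) (hA : A ∈ 𝒴) (hB : B ∈ 𝒴) (hAB : μ A ⊆ B) :
    μ (A ∪ B) = μ B := by
  have hAB𝒴 : A ∪ B ∈ 𝒴 := hUnion hA hB
  have hsub : μ (A ∪ B) ⊆ B :=
    (mu_union_subset hSub hPR hA hAB𝒴).trans (Set.union_subset hAB subset_rfl)
  exact (hCum _ hAB𝒴 B hB hsub Set.subset_union_right).symm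

theorem mu_inter_subset_mu_of_subset (hUnion : SupClosed 𝒴) (hSub : MuSubset 𝒴 μ)
    (hPR : MuPR 𝒴 μ) (hCum : MuCum 𝒴 μ) (hX : X ∈ 𝒴) (hU : U ∈ 𝒴) (hY : Y ∈ 𝒴)
    (hXU : μ X ⊆ U) (hUY : U ⊆ Y) : μ Y ∩ X ⊆ μ U := by
  rintro x ⟨hxY, hxX⟩
  have hxXY : x ∈ μ (X ∪ Y) := by
    rwa [mu_union_eq_right hUnion hSub hPR hCum hX hY (hXU.trans hUY)]
  rw [← mu_union_eq_right hUnion hSub hPR hCum hX hU hXU]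
  exact hPR _ (hUnion hX hU) _ (hUnion hX hY) (Set.union_subset_union_right X hUY)
    ⟨hxXY, Or.inl hxX⟩

theorem mu_inter_subset_mu (hUnion : SupClosed 𝒴) (hSub : MuSubset 𝒴 μ) (hPR : MuPR 𝒴 μ)
    (hCum : MuCum 𝒴 μ) (hX : X ∈ 𝒴) (hU : U ∈ 𝒴) (hXU : μ X ⊆ U) : μ U ∩ X ⊆ μ X := by
  rw [← mu_union_eq_right hUnion hSub hPR hCum hX hU hXU]
  exact mu_inter_left_subset_of_union hPR hX (hUnion hX hU)

theorem mu_union_diff_hull_subset (hUnion : SupClosed 𝒴) (hSub : MuSubset 𝒴 μ)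
    (hPR : MuPR 𝒴 μ) (hU : U ∈ 𝒴) (hY : Y ∈ 𝒴) : μ (U ∪ Y) \ hull 𝒴 μ U ⊆ μ Y := by
  rintro x ⟨hx, hxH⟩
  rcases hSub _ (hUnion hU hY) hx with hxU | hxY
  · exact absurd (self_subset_hull hSub hU hxU) hxH
  · exact mu_inter_right_subset_of_union hPR hY (hUnion hU hY) ⟨hx, hxY⟩

theorem mu_union_subset_left_of_mu_subset_hull (hUnion : SupClosed 𝒴) (hSub : MuSubset 𝒴 μ)
    (hPR : MuPR 𝒴 μ) (hCum : MuCum 𝒴 μ) (hU : U ∈ 𝒴) (hY : Y ∈ 𝒴)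
    (hμY : μ Y ⊆ hull 𝒴 μ U) : μ (U ∪ Y) ⊆ U := by
  intro x hx
  by_cases hxH : x ∈ hull 𝒴 μ U
  · obtain ⟨X, ⟨hX, hXU⟩, hxX⟩ := hxH
    exact hSub U hU <| mu_inter_subset_mu_of_subset hUnion hSub hPR hCum hX hU
      (hUnion hU hY) hXU Set.subset_union_left ⟨hx, hxX⟩
  · exact absurd (hμY (mu_union_diff_hull_subset hUnion hSub hPR hU hY ⟨hx, hxH⟩)) hxH

theorem subset_hull_and_mu_union_eq_of_mu_subset_hull (hUnion : SupClosed 𝒴)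
    (hSub : MuSubset 𝒴 μ) (hPR : MuPR 𝒴 μ) (hCum : MuCum 𝒴 μ) (hU : U ∈ 𝒴) (hY : Y ∈ 𝒴)
    (hμY : μ Y ⊆ hull 𝒴 μ U) : Y ⊆ hull 𝒴 μ U ∧ μ (U ∪ Y) = μ U := by
  have key := mu_union_subset_left_of_mu_subset_hull hUnion hSub hPR hCum hU hY hμY
  exact ⟨Set.subset_union_right.trans (subset_hull (hUnion hU hY) key),
    (hCum _ (hUnion hU hY) U hU key Set.subset_union_left).symm⟩

theorem not_subset_hull_of_mem_mu_diff (hUnion : SupClosed 𝒴) (hSub : MuSubset 𝒴 μ)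
    (hPR : MuPR 𝒴 μ) (hCum : MuCum 𝒴 μ) (hU : U ∈ 𝒴) (hY : Y ∈ 𝒴) {x : α} (hxU : x ∈ μ U)
    (hxY : x ∈ Y \ μ Y) : ¬ Y ⊆ hull 𝒴 μ U := by
  intro hYH
  have heq := (subset_hull_and_mu_union_eq_of_mu_subset_hull hUnion hSub hPR hCum hU hY
    ((hSub Y hY).trans hYH)).2
  exact hxY.2 (mu_inter_right_subset_of_union hPR hY (hUnion hU hY) ⟨heq ▸ hxU, hxY.1⟩)

theorem mu_union_not_subset_hull (hUnion : SupClosed 𝒴) (hSub : MuSubset 𝒴 μ)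
    (hPR : MuPR 𝒴 μ) (hCum : MuCum 𝒴 μ) (hU : U ∈ 𝒴) (hY : Y ∈ 𝒴)
    (hYH : ¬ Y ⊆ hull 𝒴 μ U) : ¬ μ (U ∪ Y) ⊆ hull 𝒴 μ U := by
  intro hμ
  have hUYH : U ∪ Y ⊆ hull 𝒴 μ U :=
    (subset_hull_and_mu_union_eq_of_mu_subset_hull hUnion hSub hPR hCum hU
      (hUnion hU hY) hμ).1
  exact hYH (Set.subset_union_right.trans hUYH)

end ChoiceFunction

open ChoiceFunction in
/-- Properties of μ and of the hull H(U) = ⋃{X ∈ 𝒴 : μ(X) ⊆ U} under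
(μ⊆), (μPR), (μCUM) and closure under finite unions. -/
theorem H_hull_facts {α : Type*} (𝒴 : Set (Set α)) (μ : Set α → Set α)
    (hUnion : ∀ A ∈ 𝒴, ∀ B ∈ 𝒴, A ∪ B ∈ 𝒴)
    (hSub : ∀ X ∈ 𝒴, μ X ⊆ X)
    (hPR : ∀ X ∈ 𝒴, ∀ Y ∈ 𝒴, X ⊆ Y → μ Y ∩ X ⊆ μ X)
    (hCum : ∀ X ∈ 𝒴, ∀ Y ∈ 𝒴, μ X ⊆ Y → Y ⊆ X → μ Y = μ X) :
    let H : Set α → Set α := fun U => ⋃₀ {X | X ∈ 𝒴 ∧ μ X ⊆ U}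
    (∀ A ∈ 𝒴, ∀ B ∈ 𝒴, μ A ⊆ B → μ (A ∪ B) = μ B) ∧
    (∀ X ∈ 𝒴, ∀ U ∈ 𝒴, ∀ Y ∈ 𝒴, μ X ⊆ U → U ⊆ Y → μ Y ∩ X ⊆ μ U) ∧
    (∀ X ∈ 𝒴, ∀ U ∈ 𝒴, μ X ⊆ U → μ U ∩ X ⊆ μ X) ∧
    (∀ U ∈ 𝒴, ∀ Y ∈ 𝒴, μ (U ∪ Y) \ H U ⊆ μ Y) ∧
    (∀ U ∈ 𝒴, ∀ Y ∈ 𝒴, μ Y ⊆ H U → Y ⊆ H U ∧ μ (U ∪ Y) = μ U) ∧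
    (∀ U ∈ 𝒴, ∀ Y ∈ 𝒴, ∀ x : α, x ∈ μ U → x ∈ Y \ μ Y → ¬ Y ⊆ H U) ∧
    (∀ U ∈ 𝒴, ∀ Y ∈ 𝒴, ¬ Y ⊆ H U → ¬ μ (U ∪ Y) ⊆ H U) := by
  have hClosed : SupClosed 𝒴 := fun A hA B hB => hUnion A hA B hB
  exact ⟨fun _ hA _ hB => mu_union_eq_right hClosed hSub hPR hCum hA hB,
    fun _ hX _ hU _ hY => mu_inter_subset_mu_of_subset hClosed hSub hPR hCum hX hU hY,
    fun _ hX _ hU => mu_inter_subset_mu hClosed hSub hPR hCum hX hU,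
    fun _ hU _ hY => mu_union_diff_hull_subset hClosed hSub hPR hU hY,
    fun _ hU _ hY => subset_hull_and_mu_union_eq_of_mu_subset_hull hClosed hSub hPR hCum hU hY,
    fun _ hU _ hY _ => not_subset_hull_of_mem_mu_diff hClosed hSub hPR hCum hU hY,
    fun _ hU _ hY => mu_union_not_subset_hull hClosed hSub hPR hCum hU hY⟩
end
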